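/- Let I be a finite set, G the free abelian group on I, χ : G × G → ℤ a ℤ-bilinear form, and (p_i), (s_i) two bases of G with χ(p_i, s_j) = δ_{ij}. Then the sum over all i, j of the entries of the inverse of the matrix (χ(p_i, p_j)) equals χ(s, s), where s = Σ_{i∈I} s_i. -/

import Mathlib

/-!
The pairing `χ (p i) (s j) = δᵢⱼ` says that `χ (p i)` is the `i`-th coordinate functional of the
basis `s`, and `χ (-) (s j)` the `j`-th coordinate functional of `p`. Hence `Z` is the change of
basis matrix `s.toMatrix p`, whose inverse is `W = p.toMatrix s`, and the Gram matrix of `χ` on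
`s` is `Wᵀ`; summing its entries gives `χ (∑ sᵢ) (∑ sᵢ)`.
-/

namespace LinearMap

open Matrix

variable {R M ι : Type*} [CommSemiring R] [AddCommMonoid M] [Module R M] [DecidableEq ι]

theorem apply_eq_coord_of_dual (B : M →ₗ[R] M →ₗ[R] R) (p s : Module.Basis ι R M)
    (hps : ∀ i j, B (p i) (s j) = if i = j then 1 else 0) (i : ι) :
    B (p i) = s.coord i :=
  s.ext fun j => by simp only [hps, Module.Basis.coord_apply, Module.Basis.repr_self_apply, eq_comm]

theorem flip_apply_eq_coord_of_dual (B : M →ₗ[R] M →ₗ[R] R) (p s : Module.Basis ι R M)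
    (hps : ∀ i j, B (p i) (s j) = if i = j then 1 else 0) (j : ι) :
    B.flip (s j) = p.coord j :=
  apply_eq_coord_of_dual B.flip s p (fun j i => by simp only [flip_apply, hps, eq_comm]) j

variable [Fintype ι]

theorem toMatrix₂_eq_toMatrix_of_dual (B : M →ₗ[R] M →ₗ[R] R)
    (p s : Module.Basis ι R M) (hps : ∀ i j, B (p i) (s j) = if i = j then 1 else 0) :
    toMatrix₂ p p B = s.toMatrix p := by
  ext i j
  rw [toMatrix₂_apply, apply_eq_coord_of_dual B p s hps, Module.Basis.coord_apply,
    Module.Basis.toMatrix_apply]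

theorem toMatrix₂_eq_toMatrix_transpose_of_dual (B : M →ₗ[R] M →ₗ[R] R)
    (p s : Module.Basis ι R M) (hps : ∀ i j, B (p i) (s j) = if i = j then 1 else 0) :
    toMatrix₂ s s B = (p.toMatrix s)ᵀ := by
  ext i j
  rw [toMatrix₂_apply, ← flip_apply B, flip_apply_eq_coord_of_dual B p s hps,
    Module.Basis.coord_apply, Matrix.transpose_apply, Module.Basis.toMatrix_apply]

end LinearMap

/-- With `(p i)`, `(s i)` bases of a free abelian group and a bilinear
form `χ` with `χ (p i) (s j) = δᵢⱼ`, the matrix `Z i j = χ (p i) (p j)` is invertible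
and the sum of the entries of its inverse is `χ s s` where `s = Σᵢ sᵢ`. -/
theorem magnitude_eq_euler_form
    (I : Type) [Fintype I] [DecidableEq I]
    (G : Type) [AddCommGroup G]
    (p s : Module.Basis I ℤ G)
    (χ : G →ₗ[ℤ] G →ₗ[ℤ] ℤ)
    (hps : ∀ i j, χ (p i) (s j) = if i = j then 1 else 0)
    (Z : Matrix I I ℤ)
    (hZ : ∀ i j, Z i j = χ (p i) (p j)) :
    ∃ W : Matrix I I ℤ, Z * W = 1 ∧ W * Z = 1 ∧
      ∑ i, ∑ j, W i j = χ (∑ i, s i) (∑ i, s i) := by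
  have hZp : Z = s.toMatrix p := by
    rw [← LinearMap.toMatrix₂_eq_toMatrix_of_dual χ p s hps]
    ext i j
    rw [hZ, LinearMap.toMatrix₂_apply]
  refine ⟨p.toMatrix s, by rw [hZp, Module.Basis.toMatrix_mul_toMatrix_flip],
    by rw [hZp, Module.Basis.toMatrix_mul_toMatrix_flip], ?_⟩
  calc ∑ i, ∑ j, p.toMatrix s i j = ∑ i, ∑ j, (LinearMap.toMatrix₂ s s χ).transpose i j := by
        rw [LinearMap.toMatrix₂_eq_toMatrix_transpose_of_dual χ p s hps, Matrix.transpose_transpose]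
    _ = χ (∑ i, s i) (∑ i, s i) := by
        simp only [Matrix.transpose_apply, LinearMap.toMatrix₂_apply, map_sum, LinearMap.sum_apply]
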